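/- (Lower bound on the primal suboptimality of the average response.) If 2γ‖A‖² ≤ α, then for every k ≥ 1 the average response ȳ^k = (1/k)∑_{s=0}^{k-1} y^s satisfies F₀(y⋆) − F₀(ȳ^k) ≤ (‖τ⋆‖/(γk))·( ‖τ⋆‖ + ‖τ⁰ − τ⋆‖ + 2·√(γ·E^k) ), where E^k = ∑_{s=0}^{k-1} ε^s. -/

import Mathlib

open scoped RealInnerProductSpace
open Finset

/-!
Complementary slackness makes `τ⋆` a fixed point of the projected dual step, and the projection
onto the nonnegative orthant is nonexpansive. Strong convexity gives quadratic growth of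
`L(·, τ⋆)` around its minimizer `y⋆` (with constant `α / 4` from a midpoint argument), so
`⟪τˢ - τ⋆, A yˢ - A y⋆⟫ ≤ εˢ - α / 4 ‖yˢ - y⋆‖²`; when `2 γ ‖A‖² ≤ α` this absorbs the
`γ² ‖A yˢ - A y⋆‖²` term, and `‖τˢ - τ⋆‖²` grows by at most `2 γ εˢ` per step.

On the primal side, `τᵏ` dominates `τ⁰ + γ ∑ (A yˢ - b)` componentwise, so
`γ k ⟪τ⋆, A ȳᵏ - b⟫ ≤ ⟪τ⋆, τᵏ⟫ ≤ ‖τ⋆‖ (‖τ⋆‖ + ‖τᵏ - τ⋆‖)`, while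
`F₀ y⋆ - F₀ ȳᵏ ≤ ⟪τ⋆, A ȳᵏ - b⟫` because `y⋆` minimizes `L(·, τ⋆)` over `Y`.
-/

section Convexity

variable {E : Type*} [NormedAddCommGroup E] [NormedSpace ℝ E] {s : Set E} {m : ℝ} {f g : E → ℝ}

lemma StrongConvexOn.add_convexOn (hf : StrongConvexOn s m f) (hg : ConvexOn ℝ s g) :
    StrongConvexOn s m (f + g) := by
  unfold StrongConvexOn
  simpa using hf.add (uniformConvexOn_zero.2 hg)

lemma StrongConvexOn.add_mul_norm_sub_sq_le_of_isMinOn (hf : StrongConvexOn s m f) {x y : E}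
    (hx : x ∈ s) (hy : y ∈ s) (hmin : IsMinOn f s x) :
    f x + m / 4 * ‖y - x‖ ^ 2 ≤ f y := by
  have hhalf : (0 : ℝ) ≤ 1 / 2 := by norm_num
  have hmid := hmin (hf.1 hy hx hhalf hhalf (add_halves 1))
  have hconv := hf.2 hy hx hhalf hhalf (add_halves 1)
  simp only [smul_eq_mul, Set.mem_ofPred_eq] at hmid hconv
  linarith

lemma Convex.inv_natCast_smul_sum_range_mem (hs : Convex ℝ s) {k : ℕ} (hk : k ≠ 0)
    {y : ℕ → E} (hy : ∀ i, y i ∈ s) : (k : ℝ)⁻¹ • ∑ i ∈ range k, y i ∈ s := by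
  rw [smul_sum]
  refine hs.sum_mem (fun _ _ => by positivity) ?_ fun i _ => hy i
  rw [sum_const, card_range, nsmul_eq_mul, mul_inv_cancel₀ (Nat.cast_ne_zero.2 hk)]

end Convexity

lemma le_add_two_mul_sqrt_of_sq_le {a b c : ℝ} (hb : 0 ≤ b) (hc : 0 ≤ c)
    (h : a ^ 2 ≤ b ^ 2 + 2 * c) : a ≤ b + 2 * √c := by
  refine (le_abs_self a).trans (abs_le_of_sq_le_sq (h.trans ?_) (by positivity))
  nlinarith [Real.sq_sqrt hc, Real.sqrt_nonneg c, mul_nonneg hb (Real.sqrt_nonneg c)]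

lemma sub_le_sum_of_succ_sub_le {u c : ℕ → ℝ} (h : ∀ s, u (s + 1) - u s ≤ c s) (n : ℕ) :
    u n - u 0 ≤ ∑ s ∈ range n, c s := by
  rw [← sum_range_sub]
  exact sum_le_sum fun s _ => h s

lemma max_add_mul_eq_self_of_mul_eq_zero {t g γ : ℝ} (ht : 0 ≤ t) (hg : g ≤ 0) (hγ : 0 ≤ γ)
    (htg : t * g = 0) : max (t + γ * g) 0 = t := by
  rcases mul_eq_zero.1 htg with rfl | rfl
  · simpa using mul_nonpos_of_nonneg_of_nonpos hγ hg
  · simpa using ht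

namespace EuclideanSpace

variable {κ : Type*} [Fintype κ]

lemma real_inner_eq_sum (x y : EuclideanSpace ℝ κ) : ⟪x, y⟫ = ∑ i, x i * y i := by
  simp [PiLp.inner_apply, mul_comm]

lemma real_inner_le_real_inner {x u v : EuclideanSpace ℝ κ} (hx : ∀ i, 0 ≤ x i)
    (huv : ∀ i, u i ≤ v i) : ⟪x, u⟫ ≤ ⟪x, v⟫ := by
  simp only [real_inner_eq_sum]
  exact sum_le_sum fun i _ => mul_le_mul_of_nonneg_left (huv i) (hx i)

lemma mul_eq_zero_of_real_inner_eq_zero {x y : EuclideanSpace ℝ κ} (hx : ∀ i, 0 ≤ x i)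
    (hy : ∀ i, y i ≤ 0) (h : ⟪x, y⟫ = 0) (i : κ) : x i * y i = 0 := by
  rw [real_inner_eq_sum] at h
  refine le_antisymm (mul_nonpos_of_nonneg_of_nonpos (hx i) (hy i)) ?_
  have := (sum_eq_zero_iff_of_nonpos fun j _ => mul_nonpos_of_nonneg_of_nonpos (hx j) (hy j)).1 h
  exact (this i (mem_univ i)).ge

lemma norm_le_norm_of_abs_le {x y : EuclideanSpace ℝ κ} (h : ∀ i, |x i| ≤ |y i|) :
    ‖x‖ ≤ ‖y‖ := by
  simp only [EuclideanSpace.norm_eq, Real.norm_eq_abs, sq_abs]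
  exact Real.sqrt_le_sqrt (sum_le_sum fun i _ => sq_le_sq.2 (h i))

end EuclideanSpace

section TolledPotential

variable {E H : Type*} [NormedAddCommGroup E] [NormedSpace ℝ E]
  [NormedAddCommGroup H] [InnerProductSpace ℝ H]

def tolledPotential (F₀ : E → ℝ) (A : E →L[ℝ] H) (b : H) (y : E) (τ : H) : ℝ :=
  F₀ y + ⟪τ, A y - b⟫

variable {F₀ : E → ℝ} {A : E →L[ℝ] H} {b : H}

lemma continuous_tolledPotential (hF₀ : Continuous F₀) (τ : H) :
    Continuous (tolledPotential F₀ A b · τ) :=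
  hF₀.add (continuous_const.inner (A.continuous.sub continuous_const))

lemma StrongConvexOn.tolledPotential {Y : Set E} {α : ℝ} (hF₀ : StrongConvexOn Y α F₀) (τ : H) :
    StrongConvexOn Y α (tolledPotential F₀ A b · τ) := by
  have haff : ConvexOn ℝ Y fun y => ⟪τ, A y - b⟫ := by
    refine ⟨hF₀.1, fun x _ y _ a c _ _ hac => le_of_eq ?_⟩
    simp only [map_add, map_smul, inner_sub_right, inner_add_right, real_inner_smul_right,
      smul_eq_mul]
    linear_combination ⟪τ, b⟫ * hac
  exact hF₀.add_convexOn haff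

lemma tolledPotential_sub_sub (y y' : E) (τ τ' : H) :
    (tolledPotential F₀ A b y τ - tolledPotential F₀ A b y' τ) -
      (tolledPotential F₀ A b y τ' - tolledPotential F₀ A b y' τ') = ⟪τ - τ', A y - A y'⟫ := by
  simp only [tolledPotential, inner_sub_left, inner_sub_right]
  ring

lemma map_inv_natCast_smul_sum_range_sub {k : ℕ} (hk : k ≠ 0) (y : ℕ → E) :
    A ((k : ℝ)⁻¹ • ∑ s ∈ range k, y s) - b = (k : ℝ)⁻¹ • ∑ s ∈ range k, (A (y s) - b) := by
  rw [map_smul, map_sum, sum_sub_distrib, sum_const, card_range, smul_sub,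
    ← Nat.cast_smul_eq_nsmul ℝ, smul_smul, inv_mul_cancel₀ (Nat.cast_ne_zero.2 hk), one_smul]

lemma sub_le_inv_natCast_mul_sum_inner_of_isMinOn {Y : Set E} {z : E} {σ : H}
    (hmin : IsMinOn (tolledPotential F₀ A b · σ) Y z) (hcompl : ⟪σ, A z - b⟫ = 0)
    {k : ℕ} (hk : k ≠ 0) {y : ℕ → E} (hy : (k : ℝ)⁻¹ • ∑ s ∈ range k, y s ∈ Y) :
    F₀ z - F₀ ((k : ℝ)⁻¹ • ∑ s ∈ range k, y s) ≤ (k : ℝ)⁻¹ * ∑ s ∈ range k, ⟪σ, A (y s) - b⟫ := by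
  have := hmin hy
  simp only [Set.mem_ofPred_eq, tolledPotential, hcompl, map_inv_natCast_smul_sum_range_sub hk,
    real_inner_smul_right, inner_sum] at this
  linarith

lemma inner_sub_map_sub_le_of_isMinOn {Y : Set E} {α ε : ℝ} (hF₀ : StrongConvexOn Y α F₀)
    {y y' : E} {τ τ' : H} (hy : y ∈ Y) (hy' : y' ∈ Y)
    (hmin : IsMinOn (tolledPotential F₀ A b · τ') Y y')
    (happrox : tolledPotential F₀ A b y τ ≤ tolledPotential F₀ A b y' τ + ε) :
    ⟪τ - τ', A y - A y'⟫ ≤ ε - α / 4 * ‖y - y'‖ ^ 2 := by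
  have hgrowth := (hF₀.tolledPotential τ').add_mul_norm_sub_sq_le_of_isMinOn hy' hy hmin
  rw [← tolledPotential_sub_sub (F₀ := F₀) (b := b)]
  linarith

lemma norm_sub_sq_le_of_projected_step {τ τ' σ : H} {y z : E} {γ α ε : ℝ} (hγ : 0 ≤ γ)
    (hstep : 2 * γ * ‖A‖ ^ 2 ≤ α) (hproj : ‖τ' - σ‖ ≤ ‖τ - σ + γ • (A y - A z)‖)
    (hmono : ⟪τ - σ, A y - A z⟫ ≤ ε - α / 4 * ‖y - z‖ ^ 2) :
    ‖τ' - σ‖ ^ 2 ≤ ‖τ - σ‖ ^ 2 + 2 * γ * ε := by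
  have hA : ‖A y - A z‖ ≤ ‖A‖ * ‖y - z‖ := by simpa only [map_sub] using A.le_opNorm (y - z)
  calc ‖τ' - σ‖ ^ 2 ≤ ‖τ - σ + γ • (A y - A z)‖ ^ 2 := by gcongr
    _ = ‖τ - σ‖ ^ 2 + 2 * γ * ⟪τ - σ, A y - A z⟫ + γ ^ 2 * ‖A y - A z‖ ^ 2 := by
      rw [norm_add_sq_real, real_inner_smul_right, norm_smul, mul_pow, Real.norm_eq_abs, sq_abs]
      ring
    _ ≤ ‖τ - σ‖ ^ 2 + 2 * γ * (ε - α / 4 * ‖y - z‖ ^ 2) + γ ^ 2 * (‖A‖ * ‖y - z‖) ^ 2 := by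
      gcongr
    _ ≤ ‖τ - σ‖ ^ 2 + 2 * γ * ε := by
      nlinarith [mul_le_mul_of_nonneg_left hstep (by positivity : 0 ≤ γ * ‖y - z‖ ^ 2)]

end TolledPotential

section ProjectedDualAscent

variable {κ : Type*} [Fintype κ] {γ : ℝ}

lemma norm_sub_le_of_eq_max_zero {τ τ' σ g g' : EuclideanSpace ℝ κ}
    (hτ' : ∀ i, τ' i = max (τ i + γ * g i) 0) (hσ : ∀ i, σ i = max (σ i + γ * g' i) 0) :
    ‖τ' - σ‖ ≤ ‖τ - σ + γ • (g - g')‖ := by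
  refine EuclideanSpace.norm_le_norm_of_abs_le fun i => ?_
  calc |(τ' - σ) i| = |max (τ i + γ * g i) 0 - max (σ i + γ * g' i) 0| := by
        rw [PiLp.sub_apply, ← hτ' i, ← hσ i]
    _ ≤ |τ i + γ * g i - (σ i + γ * g' i)| := abs_max_sub_max_le_abs _ _ _
    _ = |(τ - σ + γ • (g - g')) i| := by
        simp only [PiLp.add_apply, PiLp.sub_apply, PiLp.smul_apply, smul_eq_mul]
        ring_nf

lemma mul_sum_inner_le_inner_sub {τ g : ℕ → EuclideanSpace ℝ κ} {σ : EuclideanSpace ℝ κ}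
    (hσ : ∀ i, 0 ≤ σ i) (hτ : ∀ s i, τ (s + 1) i = max (τ s i + γ * g s i) 0) (n : ℕ) :
    γ * ∑ s ∈ range n, ⟪σ, g s⟫ ≤ ⟪σ, τ n⟫ - ⟪σ, τ 0⟫ := by
  rw [mul_sum, ← sum_range_sub fun s => ⟪σ, τ s⟫]
  refine sum_le_sum fun s _ => ?_
  have hle : ⟪σ, τ s + γ • g s⟫ ≤ ⟪σ, τ (s + 1)⟫ :=
    EuclideanSpace.real_inner_le_real_inner hσ fun i => by simp [hτ s i]
  rw [inner_add_right, real_inner_smul_right] at hle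
  linarith

end ProjectedDualAscent

theorem stmt_13_general
    {ι κ : Type*} [Fintype ι] [Fintype κ]
    (Y : Set (EuclideanSpace ℝ ι)) (hYcpt : IsCompact Y)
    (hYconv : Convex ℝ Y)
    (α : ℝ)
    (F₀ : EuclideanSpace ℝ ι → ℝ) (hF₀cont : Continuous F₀)
    (hF₀sc : StrongConvexOn Y α F₀)
    (A : EuclideanSpace ℝ ι →L[ℝ] EuclideanSpace ℝ κ) (b : EuclideanSpace ℝ κ)
    (L : EuclideanSpace ℝ ι → EuclideanSpace ℝ κ → ℝ)
    (hL : ∀ y τ, L y τ = F₀ y + ⟪τ, A y - b⟫)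
    (d : EuclideanSpace ℝ κ → ℝ)
    (hd : ∀ τ, d τ = sInf ((fun y => L y τ) '' Y))
    (γ : ℝ) (hγ : 0 < γ)
    (τs : ℕ → EuclideanSpace ℝ κ) (ys : ℕ → EuclideanSpace ℝ ι) (εs : ℕ → ℝ)
    (hτ0 : ∀ i, 0 ≤ τs 0 i)
    (hεs : ∀ s, 0 ≤ εs s)
    (hysY : ∀ s, ys s ∈ Y)
    (hyseq : ∀ s, L (ys s) (τs s) ≤ d (τs s) + εs s)
    (hupdate : ∀ s i, τs (s + 1) i = max (τs s i + γ * (A (ys s) - b) i) 0)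
    (τstar : EuclideanSpace ℝ κ) (hτstarpos : ∀ i, 0 ≤ τstar i)
    (ystar : EuclideanSpace ℝ ι) (hystarY : ystar ∈ Y)
    (hystarL : L ystar τstar = d τstar)
    (hystarfeas : ∀ i, (A ystar - b) i ≤ 0)
    (hcompl : ⟪τstar, A ystar - b⟫ = 0)
    (hstep : 2 * γ * ‖A‖ ^ 2 ≤ α)
    :
    ∀ k : ℕ, 1 ≤ k →
      F₀ ystar - F₀ ((k : ℝ)⁻¹ • ∑ s ∈ Finset.range k, ys s) ≤
        ‖τstar‖ / (γ * k) * (‖τstar‖ + ‖τs 0 - τstar‖ +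
          2 * Real.sqrt (γ * ∑ s ∈ Finset.range k, εs s)) := by
  intro k hk
  obtain rfl : L = tolledPotential F₀ A b := funext₂ hL
  have hdual_le : ∀ τ, ∀ y ∈ Y, d τ ≤ tolledPotential F₀ A b y τ := fun τ y hy =>
    hd τ ▸ csInf_le (hYcpt.image (continuous_tolledPotential hF₀cont τ)).bddBelow ⟨y, hy, rfl⟩
  have hmin : IsMinOn (tolledPotential F₀ A b · τstar) Y ystar := isMinOn_iff.2 fun y hy =>
    hystarL.trans_le (hdual_le τstar y hy)
  have hfixed : ∀ i, τstar i = max (τstar i + γ * (A ystar - b) i) 0 := fun i =>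
    (max_add_mul_eq_self_of_mul_eq_zero (hτstarpos i) (hystarfeas i) hγ.le
      (EuclideanSpace.mul_eq_zero_of_real_inner_eq_zero hτstarpos hystarfeas hcompl i)).symm
  have hdescent (s : ℕ) : ‖τs (s + 1) - τstar‖ ^ 2 - ‖τs s - τstar‖ ^ 2 ≤ 2 * γ * εs s := by
    have := norm_sub_sq_le_of_projected_step hγ.le hstep
      (by simpa using norm_sub_le_of_eq_max_zero (hupdate s) hfixed)
      (inner_sub_map_sub_le_of_isMinOn hF₀sc (hysY s) hystarY hmin
        ((hyseq s).trans (add_le_add_left (hdual_le _ _ hystarY) _)))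
    linarith
  have hdist : ‖τs k - τstar‖ ≤ ‖τs 0 - τstar‖ + 2 * √(γ * ∑ s ∈ range k, εs s) := by
    refine le_add_two_mul_sqrt_of_sq_le (norm_nonneg _)
      (mul_nonneg hγ.le (sum_nonneg fun s _ => hεs s)) ?_
    have := sub_le_sum_of_succ_sub_le (u := fun s => ‖τs s - τstar‖ ^ 2) hdescent k
    rw [← mul_sum] at this
    linarith
  have hk0 : k ≠ 0 := Nat.one_le_iff_ne_zero.1 hk
  have hgap := sub_le_inv_natCast_mul_sum_inner_of_isMinOn hmin hcompl hk0
    (hYconv.inv_natCast_smul_sum_range_mem hk0 hysY)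
  have hτ0_inner : 0 ≤ ⟪τstar, τs 0⟫ := by
    simpa using EuclideanSpace.real_inner_le_real_inner hτstarpos (u := 0) hτ0
  rw [div_mul_eq_mul_div, le_div_iff₀ (by positivity)]
  calc _ ≤ (k : ℝ)⁻¹ * (∑ s ∈ range k, ⟪τstar, A (ys s) - b⟫) * (γ * k) := by gcongr
    _ = γ * ∑ s ∈ range k, ⟪τstar, A (ys s) - b⟫ := by field_simp
    _ ≤ ⟪τstar, τs k⟫ := by linarith [mul_sum_inner_le_inner_sub hτstarpos hupdate k]
    _ ≤ ‖τstar‖ * ‖τs k‖ := real_inner_le_norm _ _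
    _ ≤ ‖τstar‖ * (‖τstar‖ + ‖τs 0 - τstar‖ + 2 * √(γ * ∑ s ∈ range k, εs s)) := by
      gcongr
      linarith [norm_le_norm_add_norm_sub' (τs k) τstar]

theorem stmt_13
    {ι κ : Type*} [Fintype ι] [Fintype κ] [Nonempty ι] [Nonempty κ]
    (Y : Set (EuclideanSpace ℝ ι)) (hYne : Y.Nonempty) (hYcpt : IsCompact Y)
    (hYconv : Convex ℝ Y)
    (α : ℝ) (hα : 0 < α)
    (F₀ : EuclideanSpace ℝ ι → ℝ) (hF₀cont : Continuous F₀)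
    (hF₀sc : StrongConvexOn Y α F₀)
    (A : EuclideanSpace ℝ ι →L[ℝ] EuclideanSpace ℝ κ) (b : EuclideanSpace ℝ κ)
    (L : EuclideanSpace ℝ ι → EuclideanSpace ℝ κ → ℝ)
    (hL : ∀ y τ, L y τ = F₀ y + ⟪τ, A y - b⟫)
    (d : EuclideanSpace ℝ κ → ℝ)
    (hd : ∀ τ, d τ = sInf ((fun y => L y τ) '' Y))
    (γ : ℝ) (hγ : 0 < γ)
    (τs : ℕ → EuclideanSpace ℝ κ) (ys : ℕ → EuclideanSpace ℝ ι) (εs : ℕ → ℝ)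
    (hτ0 : ∀ i, 0 ≤ τs 0 i)
    (hεs : ∀ s, 0 ≤ εs s)
    (hysY : ∀ s, ys s ∈ Y)
    (hyseq : ∀ s, L (ys s) (τs s) ≤ d (τs s) + εs s)
    (hupdate : ∀ s i, τs (s + 1) i = max (τs s i + γ * (A (ys s) - b) i) 0)
    (τstar : EuclideanSpace ℝ κ) (hτstarpos : ∀ i, 0 ≤ τstar i)
    (hτstarmax : ∀ σ : EuclideanSpace ℝ κ, (∀ i, 0 ≤ σ i) → d σ ≤ d τstar)
    (ystar : EuclideanSpace ℝ ι) (hystarY : ystar ∈ Y)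
    (hystarL : L ystar τstar = d τstar)
    (hystarfeas : ∀ i, (A ystar - b) i ≤ 0)
    (hcompl : ⟪τstar, A ystar - b⟫ = 0)
    (hstep : 2 * γ * ‖A‖ ^ 2 ≤ α)
    :
    ∀ k : ℕ, 1 ≤ k →
      F₀ ystar - F₀ ((k : ℝ)⁻¹ • ∑ s ∈ Finset.range k, ys s) ≤
        ‖τstar‖ / (γ * k) * (‖τstar‖ + ‖τs 0 - τstar‖ +
          2 * Real.sqrt (γ * ∑ s ∈ Finset.range k, εs s)) :=
  stmt_13_general Y hYcpt hYconv α F₀ hF₀cont hF₀sc A b L hL d hd γ hγ τs ys εs hτ0 hεs hysY hyseq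
    hupdate τstar hτstarpos ystar hystarY hystarL hystarfeas hcompl hstep
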